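/- For every real q>1, every n≥1 and every x∈[0,∞), the second central moment of the q-Szász operator is M_{n,q}((t−x)^2;x) = x/[n]_q. -/

import Mathlib

open scoped BigOperators

/-- The `q`-integer `[k]_q = (q^k - 1)/(q - 1)`. -/
noncomputable def qNat (q : ℝ) (k : ℕ) : ℝ := (q ^ k - 1) / (q - 1)

/-- The `q`-factorial `[k]_q! = [1]_q [2]_q ⋯ [k]_q`, with `[0]_q! = 1`. -/
noncomputable def qFactorial (q : ℝ) : ℕ → ℝ
  | 0 => 1
  | k + 1 => qFactorial q k * qNat q (k + 1)

/-- The `q`-exponential function `e_q(z) = ∑_{k=0}^∞ z^k/[k]_q!`. -/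
noncomputable def qExp (q z : ℝ) : ℝ := ∑' k : ℕ, z ^ k / qFactorial q k

/-- The `q`-Szász basis function
`s_{n,k}(q;x) = q^{-k(k-1)/2} ([n]_q^k x^k/[k]_q!) e_q(-[n]_q q^{-k} x)`. -/
noncomputable def qSzaszBasis (q : ℝ) (n k : ℕ) (x : ℝ) : ℝ :=
  (q ^ (k * (k - 1) / 2))⁻¹ * (qNat q n ^ k * x ^ k / qFactorial q k) *
    qExp q (-(qNat q n) * q ^ (-(k : ℤ)) * x)

/-- The `q`-Szász operator `M_{n,q}(f;x) = ∑_{k=0}^∞ f([k]_q/[n]_q) s_{n,k}(q;x)`. -/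
noncomputable def qSzasz (q : ℝ) (n : ℕ) (f : ℝ → ℝ) (x : ℝ) : ℝ :=
  ∑' k : ℕ, f (qNat q k / qNat q n) * qSzaszBasis q n k x

/-- The weight `w_0(x) = 1`, `w_p(x) = (1 + x^p)⁻¹` for `p ≥ 1`. -/
noncomputable def weight (p : ℕ) (x : ℝ) : ℝ := if p = 0 then 1 else (1 + x ^ p)⁻¹

/-- The weighted sup-norm `‖f‖_p = sup_{x ≥ 0} w_p(x)|f(x)|`. -/
noncomputable def wnorm (p : ℕ) (f : ℝ → ℝ) : ℝ :=
  ⨆ x : Set.Ici (0 : ℝ), weight p x.1 * |f x.1|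

/-- Membership in the space `C_p`: `f` is continuous on `[0,∞)` and `w_p f` is
uniformly continuous and bounded on `[0,∞)`. -/
def MemCp (p : ℕ) (f : ℝ → ℝ) : Prop :=
  ContinuousOn f (Set.Ici 0) ∧
  UniformContinuousOn (fun x => weight p x * f x) (Set.Ici 0) ∧
  ∃ M : ℝ, ∀ x ∈ Set.Ici (0 : ℝ), |weight p x * f x| ≤ M

/-- The second difference `Δ_h² f(x) = f(x+2h) - 2f(x+h) + f(x)`. -/
noncomputable def delta2 (f : ℝ → ℝ) (h x : ℝ) : ℝ := f (x + 2 * h) - 2 * f (x + h) + f x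

/-- The second modulus of smoothness `ω_p²(f;δ) = sup_{0<h≤δ} ‖Δ_h² f‖_p`. -/
noncomputable def omega2 (p : ℕ) (f : ℝ → ℝ) (δ : ℝ) : ℝ :=
  ⨆ h : {h : ℝ // 0 < h ∧ h ≤ δ}, wnorm p (fun x => delta2 f h.1 x)

/-- The (first) modulus of continuity on `[0,∞)`:
`ω(g;δ) = sup {|g(s)-g(t)| : s,t ≥ 0, |s-t| ≤ δ}`. -/
noncomputable def omega1 (g : ℝ → ℝ) (δ : ℝ) : ℝ :=
  sSup {d : ℝ | ∃ s t : ℝ, 0 ≤ s ∧ 0 ≤ t ∧ |s - t| ≤ δ ∧ d = |g s - g t|}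

/-- The `q`-derivative `(D_q g)(x) = (g(qx) - g(x))/((q-1)x)`. -/
noncomputable def qDeriv (q : ℝ) (g : ℝ → ℝ) (x : ℝ) : ℝ := (g (q * x) - g x) / ((q - 1) * x)

/-- The `q`-Stirling-type numbers: `S_q(0,0)=1`, `S_q(m,0)=0` for `m>0`,
`S_q(m,j)=0` for `m<j`, and `S_q(m+1,j)=[j]_q S_q(m,j) + S_q(m,j-1)`. -/
noncomputable def qStirling (q : ℝ) : ℕ → ℕ → ℝ
  | 0, 0 => 1
  | 0, _ + 1 => 0
  | _ + 1, 0 => 0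
  | m + 1, j + 1 => qNat q (j + 1) * qStirling q m (j + 1) + qStirling q m j

/-!
Write `b = [n]_q x`. Expanding the `q`-exponential turns `∑ₖ s_{n,k}(q;x)` into an absolutely
convergent double series whose antidiagonal `k + j = m` contributes
`b^m q^(-(m choose 2)) ∑ⱼ (-1)^j q^(j choose 2) / ([m-j]_q! [j]_q!)`, which vanishes for `m ≥ 1`
by the `q`-binomial theorem; hence the basis is a partition of unity. The identity
`[k+1]_q s_{n,k+1}(q;x) = b s_{n,k}(q;x/q)` together with `[k+1]_q = q [k]_q + 1` then gives the
moments `∑ₖ [k]_q s_{n,k} = b` and `∑ₖ [k]_q² s_{n,k} = b² + b`, and the central moment is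
`(b² + b)/[n]_q² - 2x b/[n]_q + x² = x/[n]_q`.
-/

open Finset

lemma Nat.add_choose_two (m n : ℕ) : (m + n).choose 2 = m.choose 2 + m * n + n.choose 2 := by
  induction n with
  | zero => simp
  | succ n ih =>
    rw [← add_assoc, Nat.choose_succ_succ', Nat.choose_succ_succ' n, ih, Nat.choose_one_right,
      Nat.choose_one_right]
    ring

lemma HasSum.sum_antidiagonal {α A : Type*} [AddCommMonoid α] [TopologicalSpace α]
    [ContinuousAdd α] [RegularSpace α] [AddMonoid A] [HasAntidiagonal A] {f : A × A → α} {a : α}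
    (hf : HasSum f a) : HasSum (fun n => ∑ p ∈ antidiagonal n, f p) a :=
  (HasAntidiagonal.sigmaAntidiagonalEquivProd.hasSum_iff.mpr hf).sigma fun n =>
    (sum_coe_sort (antidiagonal n) f) ▸ hasSum_fintype _

lemma hasSum_of_hasSum_succ {G : Type*} [AddCommGroup G] [TopologicalSpace G]
    [IsTopologicalAddGroup G] {f : ℕ → G} {a : G} (h0 : f 0 = 0)
    (h : HasSum (fun k => f (k + 1)) a) : HasSum f a := by
  simpa [h0] using (hasSum_nat_add_iff 1).mp h

section QCalculus

variable {q : ℝ}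

lemma qNat_eq_sum_range (hq : q ≠ 1) (k : ℕ) : qNat q k = ∑ i ∈ range k, q ^ i :=
  (geom_sum_eq hq k).symm

@[simp] lemma qNat_zero : qNat q 0 = 0 := by simp [qNat]

lemma qNat_succ (hq : q ≠ 1) (k : ℕ) : qNat q (k + 1) = q * qNat q k + 1 := by
  simp only [qNat_eq_sum_range hq, geom_sum_succ]

lemma qNat_add (hq : q ≠ 1) (m k : ℕ) : qNat q (m + k) = qNat q m + q ^ m * qNat q k := by
  simp only [qNat_eq_sum_range hq, sum_range_add, pow_add, mul_sum]

lemma natCast_le_qNat (hq : 1 < q) (k : ℕ) : (k : ℝ) ≤ qNat q k := by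
  rw [qNat_eq_sum_range hq.ne']
  calc (k : ℝ) = ∑ _i ∈ range k, (1 : ℝ) := by simp
    _ ≤ ∑ i ∈ range k, q ^ i := sum_le_sum fun i _ => one_le_pow₀ hq.le

lemma qNat_pos (hq : 1 < q) {k : ℕ} (hk : 0 < k) : 0 < qNat q k :=
  lt_of_lt_of_le (by exact_mod_cast hk) (natCast_le_qNat hq k)

lemma qFactorial_succ (k : ℕ) : qFactorial q (k + 1) = qFactorial q k * qNat q (k + 1) := rfl

lemma qFactorial_pos (hq : 1 < q) (k : ℕ) : 0 < qFactorial q k := by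
  induction k with
  | zero => simp [qFactorial]
  | succ k ih => exact mul_pos ih (qNat_pos hq k.succ_pos)

lemma factorial_le_qFactorial (hq : 1 < q) (k : ℕ) : (k.factorial : ℝ) ≤ qFactorial q k := by
  induction k with
  | zero => simp [qFactorial]
  | succ k ih =>
    rw [qFactorial_succ, Nat.factorial_succ, Nat.cast_mul, mul_comm]
    gcongr
    · exact (qFactorial_pos hq k).le
    · exact_mod_cast natCast_le_qNat hq (k + 1)

lemma summable_pow_div_qFactorial (hq : 1 < q) (z : ℝ) :
    Summable fun k => z ^ k / qFactorial q k :=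
  (Real.summable_pow_div_factorial |z|).of_norm_bounded fun k => by
    rw [norm_div, norm_pow, Real.norm_eq_abs, Real.norm_of_nonneg (qFactorial_pos hq k).le]
    exact div_le_div_of_nonneg_left (by positivity) (by positivity) (factorial_le_qFactorial hq k)

/-- The `q`-binomial theorem `∑ⱼ [m choose j]_q (-1)^j q^(j choose 2) = ∏_{i<m} (1 - q^i)` at
`m ≥ 1`, divided by `[m]_q!`. Multiplying by `[m]_q = [j]_q + q^j [m-j]_q` makes it telescope. -/
lemma sum_antidiagonal_qBinomial_alternating (hq : 1 < q) (m : ℕ) :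
    ∑ p ∈ antidiagonal (m + 1),
      (-1) ^ p.2 * q ^ p.2.choose 2 / (qFactorial q p.1 * qFactorial q p.2) = 0 := by
  set c : ℕ × ℕ → ℝ := fun p =>
    (-1) ^ p.2 * q ^ p.2.choose 2 / (qFactorial q p.1 * qFactorial q p.2)
  set g : ℕ × ℕ → ℝ := fun p =>
    (-1) ^ p.2 * q ^ (p.2 + 1).choose 2 / (qFactorial q p.1 * qFactorial q p.2)
  have hF := qFactorial_pos hq
  have hsplit : ∀ p ∈ antidiagonal (m + 1),
      qNat q (m + 1) * c p = qNat q p.1 * q ^ p.2 * c p + qNat q p.2 * c p := by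
    intro p hp
    rw [← mem_antidiagonal.mp hp, add_comm, qNat_add hq.ne']
    ring
  have hfst : ∀ p : ℕ × ℕ, qNat q (p.1 + 1) * q ^ p.2 * c (p.1 + 1, p.2) = g p := by
    intro p
    have := (hF p.1).ne'
    have := (hF p.2).ne'
    have := (qNat_pos hq p.1.succ_pos).ne'
    simp only [c, g, qFactorial_succ, Nat.choose_succ_succ', Nat.choose_one_right]
    field_simp
    ring
  have hsnd : ∀ p : ℕ × ℕ, qNat q (p.2 + 1) * c (p.1, p.2 + 1) = -g p := by
    intro p
    have := (hF p.1).ne'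
    have := (hF p.2).ne'
    have := (qNat_pos hq p.2.succ_pos).ne'
    simp only [c, g, qFactorial_succ]
    field_simp
    ring
  have hmul : qNat q (m + 1) * ∑ p ∈ antidiagonal (m + 1), c p = 0 := by
    rw [mul_sum, sum_congr rfl hsplit, sum_add_distrib,
      Nat.sum_antidiagonal_succ (f := fun p => qNat q p.1 * q ^ p.2 * c p),
      Nat.sum_antidiagonal_succ' (f := fun p => qNat q p.2 * c p)]
    simp only [hfst, hsnd, qNat_zero, zero_mul, sum_neg_distrib]
    ring
  exact (mul_eq_zero.mp hmul).resolve_left (qNat_pos hq m.succ_pos).ne'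

end QCalculus

section QSzasz

variable {q : ℝ}

/-- The `(k, j)` term of the double series obtained by expanding the `q`-exponential in
`s_{n,k}(q;x)`. -/
noncomputable def qSzaszTerm (q : ℝ) (n : ℕ) (x : ℝ) (p : ℕ × ℕ) : ℝ :=
  (q ^ (p.1 * (p.1 - 1) / 2))⁻¹ * (qNat q n ^ p.1 * x ^ p.1 / qFactorial q p.1) *
    ((-(qNat q n) * q ^ (-(p.1 : ℤ)) * x) ^ p.2 / qFactorial q p.2)

lemma hasSum_qSzaszTerm_fiber (hq : 1 < q) (n k : ℕ) (x : ℝ) :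
    HasSum (fun j => qSzaszTerm q n x (k, j)) (qSzaszBasis q n k x) :=
  (summable_pow_div_qFactorial hq _).hasSum.mul_left _

lemma abs_qSzaszTerm_le (hq : 1 < q) (n : ℕ) (x : ℝ) (p : ℕ × ℕ) :
    |qSzaszTerm q n x p| ≤
      |qNat q n * x| ^ p.1 / qFactorial q p.1 * (|qNat q n * x| ^ p.2 / qFactorial q p.2) := by
  have hF := qFactorial_pos hq
  set B := |qNat q n * x| ^ p.1 / qFactorial q p.1 * (|qNat q n * x| ^ p.2 / qFactorial q p.2)
  have hB : 0 ≤ B := by have := hF p.1; have := hF p.2; positivity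
  have hinv : ∀ m : ℕ, (q ^ m)⁻¹ ≤ 1 := fun m => inv_le_one_of_one_le₀ (one_le_pow₀ hq.le)
  calc |qSzaszTerm q n x p|
      = (q ^ (p.1 * (p.1 - 1) / 2))⁻¹ * ((q ^ p.1)⁻¹) ^ p.2 * B := by
        simp only [B, qSzaszTerm, zpow_neg, zpow_natCast, abs_mul, abs_div, abs_pow, abs_neg,
          abs_inv, abs_of_pos (hF p.1), abs_of_pos (hF p.2),
          abs_of_pos (pow_pos (zero_lt_one.trans hq) _)]
        ring
    _ ≤ 1 * 1 * B := by
        gcongr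
        · exact hinv _
        · exact pow_le_one₀ (by positivity) (hinv _)
    _ = B := by ring

lemma summable_qSzaszTerm (hq : 1 < q) (n : ℕ) (x : ℝ) : Summable (qSzaszTerm q n x) := by
  have hF := qFactorial_pos hq
  have h := summable_pow_div_qFactorial hq |qNat q n * x|
  refine (h.mul_of_nonneg h ?_ ?_).of_norm_bounded (abs_qSzaszTerm_le hq n x) <;>
    exact fun k => div_nonneg (by positivity) (hF k).le

lemma qSzaszTerm_eq (hq : 1 < q) (n : ℕ) (x : ℝ) (p : ℕ × ℕ) :
    qSzaszTerm q n x p = (qNat q n * x) ^ (p.1 + p.2) / q ^ (p.1 + p.2).choose 2 *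
      ((-1) ^ p.2 * q ^ p.2.choose 2 / (qFactorial q p.1 * qFactorial q p.2)) := by
  have := (qFactorial_pos hq p.1).ne'
  have := (qFactorial_pos hq p.2).ne'
  have := (zero_lt_one.trans hq).ne'
  rw [qSzaszTerm, Nat.add_choose_two, ← Nat.choose_two_right, zpow_neg, zpow_natCast, mul_pow,
    mul_pow, inv_pow, ← pow_mul]
  field_simp
  ring

lemma sum_antidiagonal_qSzaszTerm (hq : 1 < q) (n : ℕ) (x : ℝ) (m : ℕ) :
    ∑ p ∈ antidiagonal m, qSzaszTerm q n x p = if m = 0 then 1 else 0 := by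
  rcases m with _ | m
  · simp [qSzaszTerm, qFactorial]
  · rw [sum_congr rfl fun p hp => by rw [qSzaszTerm_eq hq, mem_antidiagonal.mp hp], ← mul_sum,
      sum_antidiagonal_qBinomial_alternating hq, mul_zero, if_neg m.succ_ne_zero]

theorem hasSum_qSzaszBasis (hq : 1 < q) (n : ℕ) (x : ℝ) :
    HasSum (fun k => qSzaszBasis q n k x) 1 := by
  have hT := (summable_qSzaszTerm hq n x).hasSum
  have hone : ∑' p, qSzaszTerm q n x p = 1 := by
    refine hT.sum_antidiagonal.unique ?_
    simp_rw [sum_antidiagonal_qSzaszTerm hq]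
    exact hasSum_ite_eq 0 1
  exact hone ▸ hT.prod_fiberwise (hasSum_qSzaszTerm_fiber hq n · x)

end QSzasz

section Moments

variable {q : ℝ}

lemma qNat_succ_mul_qSzaszBasis_succ (hq : 1 < q) (n k : ℕ) (x : ℝ) :
    qNat q (k + 1) * qSzaszBasis q n (k + 1) x = qNat q n * x * qSzaszBasis q n k (x / q) := by
  have := (qFactorial_pos hq k).ne'
  have := (qNat_pos hq k.succ_pos).ne'
  have := (zero_lt_one.trans hq).ne'
  have hexp :
      -qNat q n * q ^ (-((k + 1 : ℕ) : ℤ)) * x = -qNat q n * q ^ (-(k : ℤ)) * (x / q) := by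
    simp only [zpow_neg, zpow_natCast, pow_succ]
    field_simp
  have htri : (k + 1) * (k + 1 - 1) / 2 = k * (k - 1) / 2 + k := by
    rw [← Nat.choose_two_right, ← Nat.choose_two_right, Nat.choose_succ_succ',
      Nat.choose_one_right, add_comm]
  simp only [qSzaszBasis, hexp, htri, pow_add, qFactorial_succ, div_pow]
  field_simp

theorem hasSum_qNat_mul_qSzaszBasis (hq : 1 < q) (n : ℕ) (x : ℝ) :
    HasSum (fun k => qNat q k * qSzaszBasis q n k x) (qNat q n * x) := by
  refine hasSum_of_hasSum_succ (by simp) ?_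
  simp_rw [qNat_succ_mul_qSzaszBasis_succ hq]
  simpa using (hasSum_qSzaszBasis hq n (x / q)).mul_left (qNat q n * x)

theorem hasSum_qNat_sq_mul_qSzaszBasis (hq : 1 < q) (n : ℕ) (x : ℝ) :
    HasSum (fun k => qNat q k ^ 2 * qSzaszBasis q n k x) ((qNat q n * x) ^ 2 + qNat q n * x) := by
  have hrec : ∀ k : ℕ, qNat q (k + 1) ^ 2 * qSzaszBasis q n (k + 1) x =
      qNat q n * x * (q * (qNat q k * qSzaszBasis q n k (x / q)) + qSzaszBasis q n k (x / q)) := by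
    intro k
    rw [sq, mul_assoc, qNat_succ_mul_qSzaszBasis_succ hq, qNat_succ hq.ne']
    ring
  refine hasSum_of_hasSum_succ (by simp) ?_
  simp_rw [hrec]
  have h := (((hasSum_qNat_mul_qSzaszBasis hq n (x / q)).mul_left q).add
    (hasSum_qSzaszBasis hq n (x / q))).mul_left (qNat q n * x)
  have := (zero_lt_one.trans hq).ne'
  rwa [show q * (qNat q n * (x / q)) + 1 = qNat q n * x + 1 by field_simp, mul_add_one,
    ← sq] at h

end Moments

theorem qSzasz_central_moment_two_general (q : ℝ) (hq : 1 < q) (n : ℕ) (hn : 1 ≤ n)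
    (x : ℝ) :
    qSzasz q n (fun t => (t - x) ^ 2) x = x / qNat q n := by
  have hN : qNat q n ≠ 0 := (qNat_pos hq hn).ne'
  have h := (((hasSum_qNat_sq_mul_qSzaszBasis hq n x).div_const (qNat q n ^ 2)).sub
    ((hasSum_qNat_mul_qSzaszBasis hq n x).mul_left (2 * x / qNat q n))).add
    ((hasSum_qSzaszBasis hq n x).mul_left (x ^ 2))
  rw [qSzasz]
  convert h.tsum_eq using 1
  · congr 1
    funext k
    field_simp
    ring
  · field_simp
    ring

/-- second central moment `M_{n,q}((t-x)²;x) = x/[n]_q`. -/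
theorem qSzasz_central_moment_two (q : ℝ) (hq : 1 < q) (n : ℕ) (hn : 1 ≤ n)
    (x : ℝ) (hx : 0 ≤ x) :
    qSzasz q n (fun t => (t - x) ^ 2) x = x / qNat q n :=
  qSzasz_central_moment_two_general q hq n hn x
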